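/- arXiv:1401.7402 — 3 statements merged into one kernel-verified Lean document; each statement's English description precedes it below -/
import Mathlib

section
/- Let n ≥ 2 and 0 < α < 2. Let ψ ∈ C_c^∞(ℝⁿ) satisfy ∫_{ℝⁿ} ψ(x) dx = 0, and define φ(x) = ∫_{ℝⁿ} ψ(y) |x−y|^{−(n−α)} dy. Then φ(x) = O(|x|^{−(n−α+1)}) as |x| → ∞; that is, there exist constants C > 0 and R > 0 such that |φ(x)| ≤ C |x|^{−(n−α+1)} for all |x| ≥ R. -/
/-!
Since `∫ ψ = 0`, subtracting `ψ(y) |x|^{-(n-α)}` does not change the integral, so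
`φ(x) = ∫ ψ(y) (|x-y|^{-(n-α)} - |x|^{-(n-α)}) dy`. For `y` in the support and `|x|` large,
`|x-y|` and `|x|` both lie in `[|x|/2, 2|x|]`, where `t ↦ t^p` is Lipschitz with constant
`O(|x|^{p-1})` by homogeneity; the integrand is therefore `O(|ψ(y)| |x|^{-(n-α+1)})`.
-/

open MeasureTheory Filter Set

theorem exists_abs_rpow_sub_rpow_le (p : ℝ) :
    ∃ L ≥ (0 : ℝ), ∀ s > (0 : ℝ), ∀ a ∈ Icc (s / 2) (2 * s), ∀ b ∈ Icc (s / 2) (2 * s),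
      |a ^ p - b ^ p| ≤ L * s ^ (p - 1) * |a - b| := by
  have hsmooth : ContDiffOn ℝ 1 (fun t : ℝ => t ^ p) (Icc (1 / 2) 2) := fun t ht =>
    (Real.contDiffAt_rpow_const_of_ne (by linarith [ht.1])).contDiffWithinAt
  obtain ⟨K, hK⟩ := hsmooth.exists_lipschitzOnWith one_ne_zero (convex_Icc _ _) isCompact_Icc
  refine ⟨K, K.2, fun s hs a ha b hb => ?_⟩
  have hscale : ∀ c ∈ Icc (s / 2) (2 * s), c / s ∈ Icc (1 / 2) 2 ∧ c ^ p = s ^ p * (c / s) ^ p :=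
    fun c hc => by
      refine ⟨⟨?_, ?_⟩, ?_⟩
      · rw [le_div_iff₀ hs]; linarith [hc.1]
      · rw [div_le_iff₀ hs]; linarith [hc.2]
      · rw [← Real.mul_rpow hs.le (div_nonneg (by linarith [hc.1]) hs.le), mul_div_cancel₀ _ hs.ne']
  obtain ⟨ha', hap⟩ := hscale a ha
  obtain ⟨hb', hbp⟩ := hscale b hb
  have hlip := hK.dist_le_mul _ ha' _ hb'
  rw [Real.dist_eq, Real.dist_eq, ← sub_div, abs_div, abs_of_pos hs] at hlip
  calc |a ^ p - b ^ p| = s ^ p * |(a / s) ^ p - (b / s) ^ p| := by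
        rw [hap, hbp, ← mul_sub, abs_mul, abs_of_pos (Real.rpow_pos_of_pos hs p)]
    _ ≤ s ^ p * (K * (|a - b| / s)) := by gcongr
    _ = K * s ^ (p - 1) * |a - b| := by
        rw [Real.rpow_sub_one hs.ne']; field_simp

theorem abs_integral_mul_le_of_integral_eq_zero {X : Type*} [MeasurableSpace X] {μ : Measure X}
    {ψ f : X → ℝ} (hψ : Integrable ψ μ) (hf : AEStronglyMeasurable f μ) (hmean : ∫ y, ψ y ∂μ = 0)
    {c K : ℝ} (hK : ∀ y, ψ y ≠ 0 → |f y - c| ≤ K) :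
    |∫ y, ψ y * f y ∂μ| ≤ (∫ y, |ψ y| ∂μ) * K := by
  have hbound : ∀ y, ‖ψ y * (f y - c)‖ ≤ |ψ y| * K := fun y => by
    by_cases hy : ψ y = 0
    · simp [hy]
    · rw [Real.norm_eq_abs, abs_mul]
      exact mul_le_mul_of_nonneg_left (hK y hy) (abs_nonneg _)
  have hint : Integrable (fun y => ψ y * (f y - c)) μ :=
    (hψ.abs.mul_const K).mono' (hψ.1.mul (hf.sub aestronglyMeasurable_const))
      (Eventually.of_forall hbound)
  have hcancel : ∫ y, ψ y * f y ∂μ = ∫ y, ψ y * (f y - c) ∂μ := by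
    have hsplit : (fun y => ψ y * f y) = fun y => ψ y * (f y - c) + ψ y * c := by
      ext y; ring
    rw [hsplit, integral_add hint (hψ.mul_const c), integral_mul_const, hmean, zero_mul, add_zero]
  rw [hcancel, ← integral_mul_const]
  exact norm_integral_le_of_norm_le (hψ.abs.mul_const K) (Eventually.of_forall hbound)

theorem exists_abs_integral_mul_norm_sub_rpow_le {E : Type*} [NormedAddCommGroup E]
    [MeasurableSpace E] [OpensMeasurableSpace E] {μ : Measure E} {ψ : E → ℝ}
    (hψ : Integrable ψ μ) (hmean : ∫ y, ψ y ∂μ = 0) {M : ℝ} (hM : 0 < M)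
    (hsupp : ∀ y, ψ y ≠ 0 → ‖y‖ ≤ M) (β : ℝ) :
    ∃ C > (0 : ℝ), ∀ x : E, 2 * M ≤ ‖x‖ →
      |∫ y, ψ y * ‖x - y‖ ^ (-β) ∂μ| ≤ C * ‖x‖ ^ (-(β + 1)) := by
  obtain ⟨L, hL, hlip⟩ := exists_abs_rpow_sub_rpow_le (-β)
  have hI : 0 ≤ ∫ y, |ψ y| ∂μ := integral_nonneg fun y => abs_nonneg _
  refine ⟨(∫ y, |ψ y| ∂μ) * (L * M) + 1, by positivity, fun x hx => ?_⟩
  have hx0 : 0 < ‖x‖ := by linarith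
  have hnear : ∀ y, ψ y ≠ 0 →
      |‖x - y‖ ^ (-β) - ‖x‖ ^ (-β)| ≤ L * ‖x‖ ^ (-(β + 1)) * M := fun y hy => by
    have hy' := hsupp y hy
    have hdiff : |‖x - y‖ - ‖x‖| ≤ ‖y‖ := by
      simpa using abs_norm_sub_norm_le (x - y) x
    have hclose : ‖x - y‖ ∈ Icc (‖x‖ / 2) (2 * ‖x‖) := by
      constructor <;> linarith [abs_le.mp hdiff]
    have hself : ‖x‖ ∈ Icc (‖x‖ / 2) (2 * ‖x‖) := by constructor <;> linarith
    calc |‖x - y‖ ^ (-β) - ‖x‖ ^ (-β)| ≤ L * ‖x‖ ^ (-β - 1) * |‖x - y‖ - ‖x‖| :=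
          hlip _ hx0 _ hclose _ hself
      _ ≤ L * ‖x‖ ^ (-(β + 1)) * M := by
          rw [neg_add']; gcongr; exact hdiff.trans hy'
  have hmeas : AEStronglyMeasurable (fun y => ‖x - y‖ ^ (-β)) μ :=
    ((continuous_const.sub continuous_id).norm.measurable.pow_const _).aestronglyMeasurable
  calc |∫ y, ψ y * ‖x - y‖ ^ (-β) ∂μ| ≤ (∫ y, |ψ y| ∂μ) * (L * ‖x‖ ^ (-(β + 1)) * M) :=
        abs_integral_mul_le_of_integral_eq_zero hψ hmeas hmean hnear
    _ ≤ ((∫ y, |ψ y| ∂μ) * (L * M) + 1) * ‖x‖ ^ (-(β + 1)) := by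
        nlinarith [Real.rpow_nonneg hx0.le (-(β + 1)), mul_nonneg hI (mul_nonneg hL hM.le)]

theorem rieszPotential_decay_general (n : ℕ) (α : ℝ)
    (ψ : EuclideanSpace ℝ (Fin n) → ℝ)
    (hψsmooth : ContDiff ℝ (⊤ : ℕ∞) ψ) (hψsupp : HasCompactSupport ψ)
    (hψmean : ∫ x, ψ x = 0)
    (φ : EuclideanSpace ℝ (Fin n) → ℝ)
    (hφ : ∀ x, φ x = ∫ y, ψ y * ‖x - y‖ ^ (-((n : ℝ) - α))) :
    ∃ C > (0:ℝ), ∃ R > (0:ℝ), ∀ x : EuclideanSpace ℝ (Fin n),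
      R ≤ ‖x‖ → |φ x| ≤ C * ‖x‖ ^ (-((n : ℝ) - α + 1)) := by
  obtain ⟨M, hM⟩ := isBounded_iff_forall_norm_le.mp hψsupp.isBounded
  have hsupp : ∀ y, ψ y ≠ 0 → ‖y‖ ≤ max M 1 := fun y hy =>
    (hM y (subset_tsupport ψ hy)).trans (le_max_left M 1)
  obtain ⟨C, hC, hdecay⟩ := exists_abs_integral_mul_norm_sub_rpow_le
    (hψsmooth.continuous.integrable_of_hasCompactSupport hψsupp) hψmean
    (lt_max_of_lt_right one_pos) hsupp ((n : ℝ) - α)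
  exact ⟨C, hC, 2 * max M 1, by positivity, fun x hx => hφ x ▸ hdecay x hx⟩

/-- If `ψ ∈ C_c^∞(ℝⁿ)` has zero mean and `φ(x) = ∫ ψ(y) |x-y|^{-(n-α)} dy`, then
`φ(x) = O(|x|^{-(n-α+1)})` as `|x| → ∞`. -/
theorem rieszPotential_decay (n : ℕ) (hn : 2 ≤ n) (α : ℝ) (hα0 : 0 < α) (hα2 : α < 2)
    (ψ : EuclideanSpace ℝ (Fin n) → ℝ)
    (hψsmooth : ContDiff ℝ (⊤ : ℕ∞) ψ) (hψsupp : HasCompactSupport ψ)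
    (hψmean : ∫ x, ψ x = 0)
    (φ : EuclideanSpace ℝ (Fin n) → ℝ)
    (hφ : ∀ x, φ x = ∫ y, ψ y * ‖x - y‖ ^ (-((n : ℝ) - α))) :
    ∃ C > (0:ℝ), ∃ R > (0:ℝ), ∀ x : EuclideanSpace ℝ (Fin n),
      R ≤ ‖x‖ → |φ x| ≤ C * ‖x‖ ^ (-((n : ℝ) - α + 1)) :=
  rieszPotential_decay_general n α ψ hψsmooth hψsupp hψmean φ hφ
end

section
/- Let n ≥ 2 and 0 < α < 2. Let ψ ∈ C_c^∞(ℝⁿ) satisfy ∫_{ℝⁿ} ψ(x) dx = 0, and define φ(x) = ∫_{ℝⁿ} ψ(y) |x−y|^{−(n−α)} dy. Then φ ∈ L²(ℝⁿ). -/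
/-!
The potential `φ` is the convolution of `ψ` with the locally integrable kernel
`‖z‖ ^ (-s)`, `s = n - α`, hence continuous. Far from the support of `ψ`, the zero mean
of `ψ` lets one replace the kernel by `‖x - y‖ ^ (-s) - ‖x‖ ^ (-s) = O(‖x‖ ^ (-s - 1))`,
so `φ` decays like `‖x‖ ^ (-(s + 1))`, which is square integrable at infinity since
`2 (s + 1) > n`, i.e. `2α < n + 2`.
-/

open MeasureTheory Metric Set
open scoped ENNReal Convolution

theorem Real.abs_rpow_neg_sub_rpow_neg_le {s m a b : ℝ} (hs : 0 ≤ s) (hm : 0 < m) (ha : m ≤ a)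
    (hb : m ≤ b) : |a ^ (-s) - b ^ (-s)| ≤ s * m ^ (-s - 1) * |a - b| := by
  have hderiv :
      ∀ t ∈ Ici m, HasDerivWithinAt (fun t : ℝ => t ^ (-s)) (-s * t ^ (-s - 1)) (Ici m) t :=
    fun t ht => (Real.hasDerivAt_rpow_const (Or.inl (hm.trans_le ht).ne')).hasDerivWithinAt
  have hbound : ∀ t ∈ Ici m, ‖-s * t ^ (-s - 1)‖ ≤ s * m ^ (-s - 1) := fun t ht => by
    rw [norm_mul, norm_neg, Real.norm_of_nonneg hs,
      Real.norm_of_nonneg (Real.rpow_nonneg (hm.le.trans ht) _)]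
    exact mul_le_mul_of_nonneg_left (Real.rpow_le_rpow_of_nonpos hm ht (by linarith)) hs
  simpa using (convex_Ici m).norm_image_sub_le_of_norm_hasDerivWithin_le hderiv hbound hb ha

theorem abs_norm_sub_rpow_neg_sub_norm_rpow_neg_le {E : Type*} [SeminormedAddCommGroup E]
    {s : ℝ} (hs : 0 ≤ s) {x y : E} (hx : 0 < ‖x‖) (hy : 2 * ‖y‖ ≤ ‖x‖) :
    |‖x - y‖ ^ (-s) - ‖x‖ ^ (-s)| ≤ s * (‖x‖ / 2) ^ (-s - 1) * ‖y‖ := by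
  have hxy : |‖x - y‖ - ‖x‖| ≤ ‖y‖ := by
    simpa using abs_norm_sub_norm_le (x - y) x
  refine (Real.abs_rpow_neg_sub_rpow_neg_le hs (half_pos hx) ?_ (half_le_self hx.le)).trans ?_
  · linarith [(abs_le.mp hxy).1]
  · exact mul_le_mul_of_nonneg_left hxy (by positivity)

theorem abs_integral_mul_le_of_integral_eq_zero_s11 {α : Type*} [MeasurableSpace α] {μ : Measure α}
    {f g : α → ℝ} (hf : Integrable f μ) (hf0 : ∫ y, f y ∂μ = 0)
    (hfg : Integrable (fun y => f y * g y) μ) {c D : ℝ} (hD : ∀ y, f y ≠ 0 → |g y - c| ≤ D) :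
    |∫ y, f y * g y ∂μ| ≤ D * ∫ y, |f y| ∂μ := by
  have hcentred : ∫ y, f y * g y ∂μ = ∫ y, f y * (g y - c) ∂μ := by
    simp_rw [mul_sub]
    rw [integral_sub hfg (hf.mul_const c), integral_mul_const, hf0, zero_mul, sub_zero]
  rw [hcentred, ← integral_const_mul, ← Real.norm_eq_abs]
  refine norm_integral_le_of_norm_le (hf.abs.const_mul D) (ae_of_all _ fun y => ?_)
  rcases eq_or_ne (f y) 0 with hy | hy
  · simp [hy]
  · rw [norm_mul, Real.norm_eq_abs, Real.norm_eq_abs, mul_comm D]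
    exact mul_le_mul_of_nonneg_left (hD y hy) (abs_nonneg _)

theorem abs_integral_mul_norm_sub_rpow_neg_le {E : Type*} [NormedAddCommGroup E]
    [MeasurableSpace E] {μ : Measure E} {f : E → ℝ} {s R : ℝ} (hs : 0 ≤ s) (hR : 0 < R)
    (hf : Integrable f μ) (hf0 : ∫ y, f y ∂μ = 0) (hsupp : Function.support f ⊆ closedBall 0 R)
    {x : E} (hx : 2 * R ≤ ‖x‖) (hint : Integrable (fun y => f y * ‖x - y‖ ^ (-s)) μ) :
    |∫ y, f y * ‖x - y‖ ^ (-s) ∂μ| ≤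
      (s * 2 ^ (s + 1) * R * ∫ y, |f y| ∂μ) * ‖x‖ ^ (-(s + 1)) := by
  have hx0 : 0 < ‖x‖ := by linarith
  have hkernel : ∀ y, f y ≠ 0 → |‖x - y‖ ^ (-s) - ‖x‖ ^ (-s)| ≤ s * (‖x‖ / 2) ^ (-s - 1) * R :=
    fun y hy => by
      have hyR : ‖y‖ ≤ R := mem_closedBall_zero_iff.mp (hsupp hy)
      refine (abs_norm_sub_rpow_neg_sub_norm_rpow_neg_le hs hx0 (by linarith)).trans ?_
      exact mul_le_mul_of_nonneg_left hyR (by positivity)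
  have hhalf : (‖x‖ / 2) ^ (-s - 1) = 2 ^ (s + 1) * ‖x‖ ^ (-(s + 1)) := by
    rw [Real.div_rpow hx0.le zero_le_two, div_eq_mul_inv, ← Real.rpow_neg zero_le_two,
      neg_sub', sub_neg_eq_add, neg_neg, neg_add', mul_comm]
  calc |∫ y, f y * ‖x - y‖ ^ (-s) ∂μ| ≤ s * (‖x‖ / 2) ^ (-s - 1) * R * ∫ y, |f y| ∂μ :=
        abs_integral_mul_le_of_integral_eq_zero_s11 hf hf0 hint hkernel
    _ = (s * 2 ^ (s + 1) * R * ∫ y, |f y| ∂μ) * ‖x‖ ^ (-(s + 1)) := by rw [hhalf]; ring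

theorem Real.rpow_neg_le_two_rpow_mul_one_add_rpow_neg {a t : ℝ} (ha : 1 ≤ a) (ht : 0 ≤ t) :
    a ^ (-t) ≤ 2 ^ t * (1 + a) ^ (-t) := by
  have ha0 : 0 < a := by linarith
  calc a ^ (-t) = 2 ^ t * (2 * a) ^ (-t) := by
        rw [Real.mul_rpow zero_le_two ha0.le, ← mul_assoc, ← Real.rpow_add two_pos, add_neg_cancel,
          Real.rpow_zero, one_mul]
    _ ≤ 2 ^ t * (1 + a) ^ (-t) :=
        mul_le_mul_of_nonneg_left
          (Real.rpow_le_rpow_of_nonpos (by linarith) (by linarith) (by linarith)) (by positivity)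

theorem exists_norm_le_mul_one_add_norm_rpow_neg {E F : Type*} [SeminormedAddCommGroup E]
    [ProperSpace E] [SeminormedAddCommGroup F] {f : E → F} (hf : Continuous f) {t r C : ℝ}
    (ht : 0 ≤ t) (hdecay : ∀ x, r ≤ ‖x‖ → ‖f x‖ ≤ C * ‖x‖ ^ (-t)) :
    ∃ K, ∀ x, ‖f x‖ ≤ K * (1 + ‖x‖) ^ (-t) := by
  set r₁ := max r 1
  obtain ⟨B, hB⟩ := (isCompact_closedBall (0 : E) r₁).exists_bound_of_continuousOn hf.continuousOn
  refine ⟨max (B * (1 + r₁) ^ t) (|C| * 2 ^ t), fun x => ?_⟩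
  rcases le_or_gt ‖x‖ r₁ with hx | hx
  · have hfx : ‖f x‖ ≤ B := hB x (mem_closedBall_zero_iff.mpr hx)
    have hB0 : 0 ≤ B := (norm_nonneg _).trans hfx
    calc ‖f x‖ ≤ B * (1 + r₁) ^ t * (1 + r₁) ^ (-t) := by
          rw [mul_assoc, ← Real.rpow_add (by positivity), add_neg_cancel, Real.rpow_zero, mul_one]
          exact hfx
      _ ≤ max (B * (1 + r₁) ^ t) (|C| * 2 ^ t) * (1 + ‖x‖) ^ (-t) :=
          mul_le_mul (le_max_left _ _)
            (Real.rpow_le_rpow_of_nonpos (by positivity) (by linarith) (by linarith))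
            (by positivity) ((by positivity : 0 ≤ B * (1 + r₁) ^ t).trans (le_max_left _ _))
  · have hx1 : 1 ≤ ‖x‖ := (le_max_right r 1).trans hx.le
    calc ‖f x‖ ≤ |C| * ‖x‖ ^ (-t) :=
          (hdecay x ((le_max_left r 1).trans hx.le)).trans (by gcongr; exact le_abs_self C)
      _ ≤ |C| * (2 ^ t * (1 + ‖x‖) ^ (-t)) := by
          gcongr
          exact Real.rpow_neg_le_two_rpow_mul_one_add_rpow_neg hx1 ht
      _ ≤ max (B * (1 + r₁) ^ t) (|C| * 2 ^ t) * (1 + ‖x‖) ^ (-t) := by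
          rw [← mul_assoc]
          gcongr
          exact le_max_right _ _

section FiniteDimensional

variable {E : Type*} [NormedAddCommGroup E] [NormedSpace ℝ E] [FiniteDimensional ℝ E]
  [MeasurableSpace E] [BorelSpace E] {μ : Measure E} [μ.IsAddHaarMeasure]

theorem memLp_one_add_norm_rpow_neg {q : ℝ≥0∞} (hq0 : q ≠ 0) (hqtop : q ≠ ∞) {t : ℝ}
    (ht : (Module.finrank ℝ E : ℝ) < q.toReal * t) :
    MemLp (fun x : E => (1 + ‖x‖) ^ (-t)) q μ := by
  have hmeas : AEStronglyMeasurable (fun x : E => (1 + ‖x‖) ^ (-t)) μ :=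
    (Measurable.aestronglyMeasurable (by fun_prop))
  rw [← integrable_norm_rpow_iff hmeas hq0 hqtop]
  refine (integrable_one_add_norm ht).congr (ae_of_all _ fun x => ?_)
  have hx : 0 ≤ 1 + ‖x‖ := by positivity
  dsimp only
  rw [Real.norm_of_nonneg (Real.rpow_nonneg hx _), ← Real.rpow_mul hx]
  ring_nf

theorem memLp_of_continuous_of_norm_le_rpow_neg {F : Type*} [NormedAddCommGroup F] {f : E → F}
    (hf : Continuous f) {q : ℝ≥0∞} (hq0 : q ≠ 0) (hqtop : q ≠ ∞) {t r C : ℝ}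
    (ht : (Module.finrank ℝ E : ℝ) < q.toReal * t)
    (hdecay : ∀ x, r ≤ ‖x‖ → ‖f x‖ ≤ C * ‖x‖ ^ (-t)) :
    MemLp f q μ := by
  have ht0 : 0 ≤ t := by
    by_contra! h
    have : q.toReal * t ≤ 0 := mul_nonpos_of_nonneg_of_nonpos ENNReal.toReal_nonneg h.le
    linarith [(Module.finrank ℝ E).cast_nonneg (α := ℝ)]
  obtain ⟨K, hK⟩ := exists_norm_le_mul_one_add_norm_rpow_neg hf ht0 hdecay
  exact ((memLp_one_add_norm_rpow_neg hq0 hqtop ht).const_mul K).of_le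
    hf.aestronglyMeasurable (ae_of_all _ fun x => (hK x).trans (le_abs_self _))

theorem locallyIntegrable_norm_rpow_neg (hd : 1 ≤ Module.finrank ℝ E) {s : ℝ}
    (hs : s < Module.finrank ℝ E) : LocallyIntegrable (fun x : E => ‖x‖ ^ (-s)) μ :=
  locallyIntegrable_of_norm_le_rpow hd hs (C := 1)
    (ae_of_all _ fun x => by rw [one_mul, Real.norm_of_nonneg (by positivity)])
    (Measurable.aestronglyMeasurable (by fun_prop))

end FiniteDimensional

/-- If `ψ ∈ C_c^∞(ℝⁿ)` (`n ≥ 2`, `0 < α < 2`) has zero mean and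
`φ(x) = ∫ ψ(y) |x-y|^{-(n-α)} dy`, then `φ ∈ L²(ℝⁿ)`. -/
theorem rieszPotential_memL2 (n : ℕ) (hn : 2 ≤ n) (α : ℝ) (hα0 : 0 < α) (hα2 : α < 2)
    (ψ : EuclideanSpace ℝ (Fin n) → ℝ)
    (hψsmooth : ContDiff ℝ (⊤ : ℕ∞) ψ) (hψsupp : HasCompactSupport ψ)
    (hψmean : ∫ x, ψ x = 0)
    (φ : EuclideanSpace ℝ (Fin n) → ℝ)
    (hφ : ∀ x, φ x = ∫ y, ψ y * ‖x - y‖ ^ (-((n : ℝ) - α))) :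
    MemLp φ 2 (volume : Measure (EuclideanSpace ℝ (Fin n))) := by
  set s : ℝ := n - α
  have hd : Module.finrank ℝ (EuclideanSpace ℝ (Fin n)) = n := finrank_euclideanSpace_fin
  have hn' : (2 : ℝ) ≤ n := by exact_mod_cast hn
  have hψ : Continuous ψ := hψsmooth.continuous
  have hkernel : LocallyIntegrable (fun z : EuclideanSpace ℝ (Fin n) => ‖z‖ ^ (-s)) volume :=
    locallyIntegrable_norm_rpow_neg (by omega) (by rw [hd]; linarith)
  have hconv : φ = ψ ⋆[ContinuousLinearMap.mul ℝ ℝ] fun z => ‖z‖ ^ (-s) :=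
    funext fun x => by rw [hφ, convolution_mul]
  obtain ⟨R, hR, hRψ⟩ := hψsupp.isCompact.isBounded.exists_pos_norm_le
  have hdecay : ∀ x, 2 * R ≤ ‖x‖ →
      ‖φ x‖ ≤ (s * 2 ^ (s + 1) * R * ∫ y, |ψ y|) * ‖x‖ ^ (-(s + 1)) := fun x hx => by
    rw [Real.norm_eq_abs, hφ]
    exact abs_integral_mul_norm_sub_rpow_neg_le (by linarith) hR
      (hψ.integrable_of_hasCompactSupport hψsupp) hψmean
      (fun y hy => mem_closedBall_zero_iff.mpr (hRψ y (subset_tsupport ψ hy))) hx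
      (hψsupp.convolutionExists_left (ContinuousLinearMap.mul ℝ ℝ) hψ hkernel x)
  exact memLp_of_continuous_of_norm_le_rpow_neg
    (hconv ▸ hψsupp.continuous_convolution_left _ hψ hkernel) two_ne_zero ENNReal.ofNat_ne_top
    (by rw [hd, ENNReal.toReal_ofNat]; linarith) hdecay
end

section
/- Let n ≥ 2, 0 < α < 2, and k > 0. Let u : ℝⁿ → ℝ be nonnegative and measurable with ∫_{B_k(0)} u(y) (k² − |y|²)^{−α/2} dy < ∞, and for |x| > k define h(x) = ∫_{B_k(0)} P_k(y, x) u(y) dy, where P_k(y, x) = Γ(n/2) π^{−n/2−1} sin(πα/2) · (|x|² − k²)^{α/2} (k² − |y|²)^{−α/2} |x − y|^{−n}. Then there is a constant c₁ ≥ 0 such that h(x) = c₁ |x|^{−(n−α)} + O(|x|^{−(n−α+1)}) as |x| → ∞; that is, there exist C > 0 and R > k with |h(x) − c₁ |x|^{−(n−α)}| ≤ C |x|^{−(n−α+1)} for all |x| ≥ R. -/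
open MeasureTheory Filter Metric

/-!
For `|y| < k` and `|x| ≥ 2k` we have `| |x - y| - |x| | ≤ k`, so the kernel
`(|x|² - k²)^{α/2} |x - y|^{-n}` equals `|x|^{α-n}` up to an error `O(k |x|^{α-n-1})`, uniformly
in `y`. Integrating this against the finite measure `u(y) (k² - |y|²)^{-α/2} dy` on `B_k` gives
the expansion with `c₁ = Γ(n/2) π^{-n/2-1} sin(πα/2) ∫_{B_k} u(y) (k² - |y|²)^{-α/2} dy`.
-/

lemma abs_rpow_sq_sub_sq_sub_rpow_le {α k r : ℝ} (hα0 : 0 ≤ α) (hα2 : α ≤ 2) (hk : 0 ≤ k)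
    (hkr : k < r) :
    |(r ^ 2 - k ^ 2) ^ (α / 2) - r ^ α| ≤ k / r * r ^ α := by
  have hr : 0 < r := hk.trans_lt hkr
  have hq0 : 0 ≤ k / r := div_nonneg hk hr.le
  have hq1 : k / r < 1 := (div_lt_one hr).2 hkr
  have hbase : 0 < 1 - (k / r) ^ 2 := by nlinarith
  have hsq : (r ^ 2) ^ (α / 2) = r ^ α := by
    rw [← Real.rpow_natCast, ← Real.rpow_mul hr.le]
    congr 1
    push_cast
    ring
  have hfac : (r ^ 2 - k ^ 2) ^ (α / 2) = r ^ α * (1 - (k / r) ^ 2) ^ (α / 2) := by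
    rw [show r ^ 2 - k ^ 2 = r ^ 2 * (1 - (k / r) ^ 2) by field_simp,
      Real.mul_rpow (by positivity) hbase.le, hsq]
  have hlow : 1 - (k / r) ^ 2 ≤ (1 - (k / r) ^ 2) ^ (α / 2) := by
    simpa using Real.rpow_le_rpow_of_exponent_ge hbase (by nlinarith) (by linarith : α / 2 ≤ 1)
  have hup : (1 - (k / r) ^ 2) ^ (α / 2) ≤ 1 :=
    Real.rpow_le_one hbase.le (by nlinarith) (by linarith)
  have hrα : 0 < r ^ α := Real.rpow_pos_of_pos hr α
  rw [hfac, abs_le]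
  constructor <;> nlinarith [mul_le_mul_of_nonneg_left hlow hrα.le,
    mul_le_mul_of_nonneg_left hup hrα.le, mul_le_mul_of_nonneg_left hq1.le hq0]

lemma abs_inv_pow_sub_inv_pow_le {r s : ℝ} (hr : 0 < r) (hsr : |s - r| ≤ r / 2) (n : ℕ) :
    |(s ^ n)⁻¹ - (r ^ n)⁻¹| ≤ n * 4 ^ n * |s - r| / r ^ (n + 1) := by
  obtain ⟨hs_low, hs_up⟩ : r / 2 ≤ s ∧ s ≤ 2 * r := by
    constructor <;> linarith [(abs_le.1 hsr).1, (abs_le.1 hsr).2]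
  have hs : 0 < s := by linarith
  rcases n with _ | m
  · simp
  have hnum : |r ^ (m + 1) - s ^ (m + 1)| ≤ |s - r| * (m + 1) * (2 * r) ^ m := by
    refine (abs_pow_sub_pow_le r s (m + 1)).trans ?_
    rw [abs_sub_comm, Nat.add_sub_cancel, Nat.cast_succ, abs_of_pos hr, abs_of_pos hs]
    gcongr
    exact max_le (by linarith) hs_up
  have hden : (r / 2) ^ (m + 1) * r ^ (m + 1) ≤ s ^ (m + 1) * r ^ (m + 1) := by gcongr
  rw [inv_sub_inv (pow_pos hs _).ne' (pow_pos hr _).ne', abs_div,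
    abs_of_pos (by positivity : 0 < s ^ (m + 1) * r ^ (m + 1))]
  calc |r ^ (m + 1) - s ^ (m + 1)| / (s ^ (m + 1) * r ^ (m + 1))
      ≤ |s - r| * (m + 1) * (2 * r) ^ m / ((r / 2) ^ (m + 1) * r ^ (m + 1)) := by
        gcongr
    _ = 2 ^ m * 2 ^ m * 2 * (m + 1) * |s - r| / r ^ (m + 2) := by
        rw [div_pow]
        field_simp
        ring
    _ ≤ ((m + 1 : ℕ) : ℝ) * 4 ^ (m + 1) * |s - r| / r ^ (m + 1 + 1) := by
        rw [show (4 : ℝ) ^ (m + 1) = 2 ^ m * 2 ^ m * 4 by rw [pow_succ, ← mul_pow]; norm_num]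
        push_cast
        gcongr ?_ / _
        have h2m : (0 : ℝ) ≤ 2 ^ m * 2 ^ m * (m + 1) * |s - r| := by positivity
        linarith

lemma abs_rpow_sq_sub_sq_div_pow_sub_rpow_le {α k r s : ℝ} (n : ℕ) (hα0 : 0 ≤ α) (hα2 : α ≤ 2)
    (hk : 0 < k) (hkr : 2 * k ≤ r) (hsr : |s - r| ≤ k) :
    |(r ^ 2 - k ^ 2) ^ (α / 2) / s ^ n - r ^ (α - n)| ≤
      (2 ^ n + n * 4 ^ n) * k * r ^ (α - n - 1) := by
  have hr : 0 < r := by linarith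
  have hs : 0 < s := by linarith [(abs_le.1 hsr).1]
  have hrα : 0 < r ^ α := Real.rpow_pos_of_pos hr α
  have hsn_pos : 0 < (s ^ n)⁻¹ := inv_pos.2 (pow_pos hs n)
  have hA := abs_rpow_sq_sub_sq_sub_rpow_le hα0 hα2 hk.le (by linarith : k < r)
  have hsn : (s ^ n)⁻¹ ≤ 2 ^ n / r ^ n := by
    have : s⁻¹ ≤ 2 / r := by
      rw [inv_le_comm₀ hs (by positivity), inv_div]
      linarith [(abs_le.1 hsr).1]
    rw [← inv_pow, ← div_pow]
    exact pow_le_pow_left₀ (inv_nonneg.2 hs.le) this n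
  have hinv : |(s ^ n)⁻¹ - (r ^ n)⁻¹| ≤ n * 4 ^ n * k / r ^ (n + 1) := by
    refine (abs_inv_pow_sub_inv_pow_le hr (by linarith) n).trans ?_
    gcongr
  have hsplit : (r ^ 2 - k ^ 2) ^ (α / 2) / s ^ n - r ^ (α - n) =
      ((r ^ 2 - k ^ 2) ^ (α / 2) - r ^ α) * (s ^ n)⁻¹ + r ^ α * ((s ^ n)⁻¹ - (r ^ n)⁻¹) := by
    rw [Real.rpow_sub hr, Real.rpow_natCast]
    ring
  rw [hsplit, show α - n - 1 = α - (n + 1 : ℕ) by push_cast; ring, Real.rpow_sub hr,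
    Real.rpow_natCast]
  calc _ ≤ |(r ^ 2 - k ^ 2) ^ (α / 2) - r ^ α| * (s ^ n)⁻¹
        + r ^ α * |(s ^ n)⁻¹ - (r ^ n)⁻¹| := by
        refine (abs_add_le _ _).trans_eq ?_
        rw [abs_mul, abs_mul, abs_of_pos hrα, abs_of_pos hsn_pos]
    _ ≤ k / r * r ^ α * (2 ^ n / r ^ n) + r ^ α * (n * 4 ^ n * k / r ^ (n + 1)) :=
        add_le_add (mul_le_mul hA hsn hsn_pos.le (by positivity))
          (mul_le_mul_of_nonneg_left hinv hrα.le)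
    _ = _ := by
        field_simp
        ring

lemma abs_setIntegral_mul_sub_le {X : Type*} [MeasurableSpace X] {μ : Measure X} {s : Set X}
    (hs : MeasurableSet s) {g K : X → ℝ} (hg : IntegrableOn g s μ) (hg0 : ∀ y ∈ s, 0 ≤ g y)
    (hK : AEStronglyMeasurable K (μ.restrict s)) {T B : ℝ} (hKT : ∀ y ∈ s, |K y - T| ≤ B) :
    |∫ y in s, g y * K y ∂μ - T * ∫ y in s, g y ∂μ| ≤ B * ∫ y in s, g y ∂μ := by
  have hKbdd : ∀ᵐ y ∂μ.restrict s, ‖K y‖ ≤ |T| + B := by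
    filter_upwards [ae_restrict_mem hs] with y hy
    rw [Real.norm_eq_abs]
    linarith [hKT y hy, abs_sub_abs_le_abs_sub (K y) T]
  have hgK : IntegrableOn (fun y => g y * K y) s μ := hg.mul_bdd hK hKbdd
  rw [← integral_const_mul, ← integral_sub hgK (hg.const_mul T), ← integral_const_mul,
    ← Real.norm_eq_abs]
  refine norm_integral_le_of_norm_le (hg.const_mul B) ?_
  filter_upwards [ae_restrict_mem hs] with y hy
  rw [Real.norm_eq_abs, show g y * K y - T * g y = g y * (K y - T) by ring, abs_mul,
    abs_of_nonneg (hg0 y hy), mul_comm B]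
  exact mul_le_mul_of_nonneg_left (hKT y hy) (hg0 y hy)

lemma exteriorPoisson_const_nonneg (n : ℕ) {α : ℝ} (hα0 : 0 ≤ α) (hα2 : α ≤ 2) :
    0 ≤ Real.Gamma ((n : ℝ) / 2) * Real.pi ^ (-(n : ℝ) / 2 - 1) * Real.sin (Real.pi * α / 2) :=
  mul_nonneg (mul_nonneg (Real.Gamma_nonneg_of_nonneg (by positivity))
    (Real.rpow_nonneg Real.pi_pos.le _))
    (Real.sin_nonneg_of_nonneg_of_le_pi (by positivity) (by nlinarith [Real.pi_pos]))

theorem poissonIntegral_expansion_general (n : ℕ)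
    (α : ℝ) (hα0 : 0 < α) (hα2 : α < 2) (k : ℝ) (hk : 0 < k)
    (u : EuclideanSpace ℝ (Fin n) → ℝ)
    (hupos : ∀ y, 0 ≤ u y)
    (hint : IntegrableOn (fun y => u y * (k ^ 2 - ‖y‖ ^ 2) ^ (-(α / 2)))
      (ball (0 : EuclideanSpace ℝ (Fin n)) k))
    (h : EuclideanSpace ℝ (Fin n) → ℝ)
    (hh : ∀ x, k < ‖x‖ → h x = ∫ y in ball (0 : EuclideanSpace ℝ (Fin n)) k,
      Real.Gamma ((n : ℝ) / 2) * Real.pi ^ (-(n : ℝ) / 2 - 1) * Real.sin (Real.pi * α / 2) *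
        ((‖x‖ ^ 2 - k ^ 2) ^ (α / 2) / ((k ^ 2 - ‖y‖ ^ 2) ^ (α / 2) * ‖x - y‖ ^ n)) * u y) :
    ∃ c₁ ≥ (0:ℝ), ∃ C > (0:ℝ), ∃ R > k, ∀ x : EuclideanSpace ℝ (Fin n), R ≤ ‖x‖ →
      |h x - c₁ * ‖x‖ ^ (-((n : ℝ) - α))| ≤ C * ‖x‖ ^ (-((n : ℝ) - α + 1)) := by
  set c := Real.Gamma ((n : ℝ) / 2) * Real.pi ^ (-(n : ℝ) / 2 - 1) * Real.sin (Real.pi * α / 2)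
  have hc : 0 ≤ c := exteriorPoisson_const_nonneg n hα0.le hα2.le
  set g := fun y : EuclideanSpace ℝ (Fin n) => u y * (k ^ 2 - ‖y‖ ^ 2) ^ (-(α / 2))
  have hweight : ∀ y ∈ ball (0 : EuclideanSpace ℝ (Fin n)) k, 0 < k ^ 2 - ‖y‖ ^ 2 := fun y hy => by
    nlinarith [mem_ball_zero_iff.1 hy, norm_nonneg y]
  have hg0 : ∀ y ∈ ball (0 : EuclideanSpace ℝ (Fin n)) k, 0 ≤ g y := fun y hy =>
    mul_nonneg (hupos y) (Real.rpow_nonneg (hweight y hy).le _)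
  set I := ∫ y in ball (0 : EuclideanSpace ℝ (Fin n)) k, g y
  have hI : 0 ≤ I := setIntegral_nonneg measurableSet_ball hg0
  set C₀ : ℝ := (2 ^ n + n * 4 ^ n) * k
  have hC₀ : 0 ≤ C₀ := by positivity
  refine ⟨c * I, by positivity, c * C₀ * I + 1, by positivity, 2 * k, by linarith, fun x hx => ?_⟩
  set K := fun y : EuclideanSpace ℝ (Fin n) => (‖x‖ ^ 2 - k ^ 2) ^ (α / 2) / ‖x - y‖ ^ n
  have hhx : h x = c * ∫ y in ball (0 : EuclideanSpace ℝ (Fin n)) k, g y * K y := by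
    rw [hh x (by linarith), ← integral_const_mul]
    refine setIntegral_congr_fun measurableSet_ball fun y hy => ?_
    simp only [g, K, Real.rpow_neg (hweight y hy).le]
    ring
  have hkernel : ∀ y ∈ ball (0 : EuclideanSpace ℝ (Fin n)) k,
      |K y - ‖x‖ ^ (α - n)| ≤ C₀ * ‖x‖ ^ (α - n - 1) := fun y hy =>
    (abs_rpow_sq_sub_sq_div_pow_sub_rpow_le n hα0.le hα2.le hk hx
      ((abs_norm_sub_norm_le _ _).trans (by simpa using (mem_ball_zero_iff.1 hy).le))).trans_eq
      (by ring)
  have hest := abs_setIntegral_mul_sub_le measurableSet_ball hint hg0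
    (by fun_prop : Measurable K).aestronglyMeasurable hkernel
  set J := ∫ y in ball (0 : EuclideanSpace ℝ (Fin n)) k, g y * K y
  rw [neg_sub, show -((n : ℝ) - α + 1) = α - n - 1 by ring, hhx,
    show c * J - c * I * ‖x‖ ^ (α - n) = c * (J - ‖x‖ ^ (α - n) * I) by ring, abs_mul,
    abs_of_nonneg hc]
  calc c * |J - ‖x‖ ^ (α - n) * I| ≤ c * (C₀ * ‖x‖ ^ (α - n - 1) * I) := by gcongr
    _ ≤ (c * C₀ * I + 1) * ‖x‖ ^ (α - n - 1) := by
        nlinarith [Real.rpow_pos_of_pos (by linarith : (0 : ℝ) < ‖x‖) (α - n - 1)]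

/-- **Asymptotic expansion of exterior Poisson integrals.** Let `n ≥ 2`, `0 < α < 2`, `k > 0`,
let `u ≥ 0` be measurable with `∫_{B_k} u(y)(k²-|y|²)^{-α/2} dy < ∞`, and for `|x| > k` let
`h(x) = ∫_{B_k} P_k(y,x) u(y) dy` with the exterior Poisson kernel
`P_k(y,x) = Γ(n/2) π^{-n/2-1} sin(πα/2) (|x|²-k²)^{α/2} (k²-|y|²)^{-α/2} |x-y|^{-n}`.
Then `h(x) = c₁ |x|^{-(n-α)} + O(|x|^{-(n-α+1)})` as `|x| → ∞` for some constant `c₁ ≥ 0`. -/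
theorem poissonIntegral_expansion (n : ℕ) (hn : 2 ≤ n)
    (α : ℝ) (hα0 : 0 < α) (hα2 : α < 2) (k : ℝ) (hk : 0 < k)
    (u : EuclideanSpace ℝ (Fin n) → ℝ)
    (hum : Measurable u) (hupos : ∀ y, 0 ≤ u y)
    (hint : IntegrableOn (fun y => u y * (k ^ 2 - ‖y‖ ^ 2) ^ (-(α / 2)))
      (ball (0 : EuclideanSpace ℝ (Fin n)) k))
    (h : EuclideanSpace ℝ (Fin n) → ℝ)
    (hh : ∀ x, k < ‖x‖ → h x = ∫ y in ball (0 : EuclideanSpace ℝ (Fin n)) k,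
      Real.Gamma ((n : ℝ) / 2) * Real.pi ^ (-(n : ℝ) / 2 - 1) * Real.sin (Real.pi * α / 2) *
        ((‖x‖ ^ 2 - k ^ 2) ^ (α / 2) / ((k ^ 2 - ‖y‖ ^ 2) ^ (α / 2) * ‖x - y‖ ^ n)) * u y) :
    ∃ c₁ ≥ (0:ℝ), ∃ C > (0:ℝ), ∃ R > k, ∀ x : EuclideanSpace ℝ (Fin n), R ≤ ‖x‖ →
      |h x - c₁ * ‖x‖ ^ (-((n : ℝ) - α))| ≤ C * ‖x‖ ^ (-((n : ℝ) - α + 1)) :=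
  poissonIntegral_expansion_general n α hα0 hα2 k hk u hupos hint h hh
end
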